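/- arXiv:0810.4338 — 3 statements merged into one kernel-verified Lean document; each statement's English description precedes it below -/
import Mathlib

section
/- If a finite set A of integers tiles ℤ by translations (i.e. ℤ = A ⊕ B for some B ⊆ ℤ), then any such tiling complement B is periodic: there exists a positive integer t such that B + t = B. Moreover a period t can be chosen with t ≤ 2^{diam(A)}. -/
/-!
Let `d = diam A`. In a tiling, `x ∈ B` exactly when no `a ∈ A \ {c}` has `x + c - a ∈ B`, for any
fixed `c ∈ A`. Taking `c = min A` shows that membership of `x` is decided by `B` on the window
`[x - d, x)`, and taking `c = max A` that it is decided by `B` on `(x, x + d]`. Among the `2 ^ d + 1`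
windows of length `d` starting at `0, 1, …, 2 ^ d` two agree, say at `m` and `m + t`; propagating the
agreement one step at a time in both directions shows that `B` is `t`-periodic.
-/

def IsTiling (A : Finset ℤ) (B : Set ℤ) : Prop :=
  ∀ n : ℤ, ∃! p : ℤ × ℤ, p.1 ∈ A ∧ p.2 ∈ B ∧ p.1 + p.2 = n

namespace IsTiling

variable {A : Finset ℤ} {B : Set ℤ}

theorem mem_iff (h : IsTiling A B) {c : ℤ} (hc : c ∈ A) (x : ℤ) :
    x ∈ B ↔ ∀ a ∈ A, a ≠ c → x + c - a ∉ B := by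
  obtain ⟨p, ⟨hpA, hpB, hpsum⟩, huniq⟩ := h (x + c)
  constructor
  · intro hx a ha hac hxa
    have hcx : (c, x) = p := huniq (c, x) ⟨hc, hx, by ring⟩
    have hax : (a, x + c - a) = p := huniq (a, x + c - a) ⟨ha, hxa, by ring⟩
    exact hac (congrArg Prod.fst (hax.trans hcx.symm))
  · intro hx
    by_cases hpc : p.1 = c
    · have hpx : p.2 = x := by omega
      rwa [← hpx]
    · exact absurd (show x + c - p.1 ∈ B by rwa [show x + c - p.1 = p.2 by omega])
        (hx p.1 hpA hpc)

theorem mem_iff_mem_of_forall (h : IsTiling A B) {c x y : ℤ} (hc : c ∈ A)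
    (hxy : ∀ a ∈ A, a ≠ c → (x + c - a ∈ B ↔ y + c - a ∈ B)) : x ∈ B ↔ y ∈ B := by
  rw [h.mem_iff hc x, h.mem_iff hc y]
  exact forall₂_congr fun a ha => imp_congr_right fun hac => not_congr (hxy a ha hac)

variable {d : ℕ}

theorem mem_iff_mem_of_left_window (h : IsTiling A B) (hA : A.Nonempty)
    (hd : ∀ a ∈ A, ∀ a' ∈ A, a - a' ≤ d) {x y : ℤ}
    (hxy : ∀ k : ℤ, 0 < k → k ≤ d → (x - k ∈ B ↔ y - k ∈ B)) : x ∈ B ↔ y ∈ B := by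
  refine h.mem_iff_mem_of_forall (A.min'_mem hA) fun a ha hne => ?_
  have hlt : A.min' hA < a := lt_of_le_of_ne (A.min'_le a ha) (Ne.symm hne)
  convert hxy (a - A.min' hA) (by omega) (hd a ha _ (A.min'_mem hA)) using 2 <;> ring

theorem mem_iff_mem_of_right_window (h : IsTiling A B) (hA : A.Nonempty)
    (hd : ∀ a ∈ A, ∀ a' ∈ A, a - a' ≤ d) {x y : ℤ}
    (hxy : ∀ k : ℤ, 0 < k → k ≤ d → (x + k ∈ B ↔ y + k ∈ B)) : x ∈ B ↔ y ∈ B := by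
  refine h.mem_iff_mem_of_forall (A.max'_mem hA) fun a ha hne => ?_
  have hlt : a < A.max' hA := lt_of_le_of_ne (A.le_max' a ha) hne
  convert hxy (A.max' hA - a) (by omega) (hd _ (A.max'_mem hA) a ha) using 2 <;> ring

end IsTiling

theorem exists_window_eq (B : Set ℤ) (d : ℕ) :
    ∃ m t : ℤ, 0 < t ∧ t ≤ 2 ^ d ∧ ∀ k, m ≤ k → k < m + d → (k + t ∈ B ↔ k ∈ B) := by
  obtain ⟨i, j, hne, heq⟩ := Fintype.exists_ne_map_eq_of_card_lt
    (fun i : Fin (2 ^ d + 1) => {k : Fin d | ((i : ℕ) : ℤ) + (k : ℕ) ∈ B})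
    (by simp [Fintype.card_set])
  wlog hij : i < j generalizing i j
  · exact this j i hne.symm heq.symm (lt_of_le_of_ne (not_lt.1 hij) hne.symm)
  have hj := j.isLt
  have hlt : (i : ℕ) < j := hij
  refine ⟨(i : ℕ), (j : ℕ) - (i : ℕ), by omega, ?_, fun k hk hkd => ?_⟩
  · have : ((j : ℕ) : ℤ) ≤ 2 ^ d := by exact_mod_cast Nat.lt_succ_iff.1 hj
    omega
  have := Set.ext_iff.1 heq ⟨(k - (i : ℕ)).toNat, by omega⟩
  simp only [Set.mem_ofPred_eq] at this
  convert this.symm using 2 <;> omega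

theorem add_mem_iff_of_window_eq {B : Set ℤ} {d : ℕ} {m t : ℤ}
    (hleft : ∀ x y : ℤ, (∀ k : ℤ, 0 < k → k ≤ d → (x - k ∈ B ↔ y - k ∈ B)) → (x ∈ B ↔ y ∈ B))
    (hright : ∀ x y : ℤ, (∀ k : ℤ, 0 < k → k ≤ d → (x + k ∈ B ↔ y + k ∈ B)) → (x ∈ B ↔ y ∈ B))
    (hm : ∀ k, m ≤ k → k < m + d → (k + t ∈ B ↔ k ∈ B)) (x : ℤ) : x + t ∈ B ↔ x ∈ B := by
  let Q : ℤ → Prop := fun n => ∀ k, n ≤ k → k < n + d → (k + t ∈ B ↔ k ∈ B)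
  have step_up : ∀ n, Q n → Q (n + 1) := by
    intro n hn k hk hkd
    rcases lt_or_eq_of_le (show k ≤ n + d by omega) with hlt | rfl
    · exact hn k (by omega) hlt
    · exact hleft _ _ fun j hj hjd => by
        convert hn (n + d - j) (by omega) (by omega) using 2; ring
  have step_down : ∀ n, Q n → Q (n - 1) := by
    intro n hn k hk hkd
    rcases lt_or_eq_of_le hk with hlt | rfl
    · exact hn k (by omega) (by omega)
    · exact hright _ _ fun j hj hjd => by
        convert hn (n - 1 + j) (by omega) (by omega) using 2; ring
  have hQ : ∀ n, Q n := fun n =>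
    Int.inductionOn' n m hm (fun n _ => step_up n) (fun n _ => step_down n)
  exact hleft _ _ fun j hj hjd => by
    convert hQ (x - d) (x - j) (by omega) (by omega) using 2; ring

/-- Newman's theorem: any tiling complement `B` of a finite set `A ⊆ ℤ` is periodic,
with a period `t` satisfying `0 < t ≤ 2^{diam A}`. -/
theorem stmt_6 (A : Finset ℤ) (hA : A.Nonempty) (B : Set ℤ)
    (htile : ∀ n : ℤ, ∃! p : ℤ × ℤ, p.1 ∈ A ∧ p.2 ∈ B ∧ p.1 + p.2 = n) :
    ∃ t : ℤ, 0 < t ∧ (fun b => b + t) '' B = B ∧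
      t ≤ 2 ^ (A.max' hA - A.min' hA).toNat := by
  set d := (A.max' hA - A.min' hA).toNat
  have hdiam : ∀ a ∈ A, ∀ a' ∈ A, a - a' ≤ d := fun a ha a' ha' => by
    have := A.le_max' a ha
    have := A.min'_le a' ha'
    have := Int.self_le_toNat (A.max' hA - A.min' hA)
    omega
  have htile : IsTiling A B := htile
  obtain ⟨m, t, ht, htd, hm⟩ := exists_window_eq B d
  have hper := add_mem_iff_of_window_eq (fun _ _ => htile.mem_iff_mem_of_left_window hA hdiam)
    (fun _ _ => htile.mem_iff_mem_of_right_window hA hdiam) hm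
  refine ⟨t, ht, ?_, htd⟩
  ext x
  rw [Set.image_add_right, Set.mem_preimage, ← hper, neg_add_cancel_right]
end

section
/- Let A ⊆ ℤ_{≥0} be finite with 0 ∈ A and suppose A tiles ℤ_N. Then condition (T1^N) holds: A(1) = ∏_{s∈S_A^N} Φ_s(1), where S_A^N is the set of prime powers dividing N whose cyclotomic polynomial divides A(X). -/
open Polynomial

/-- If `A` tiles `ℤ_N` then the local condition `(T1^N)` holds:
`A(1) = ∏_{s ∈ S_A^N} Φ_s(1)`. -/
theorem stmt_12 (A : Finset ℕ) (h0 : 0 ∈ A) (N : ℕ) (hN : 0 < N)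
    (P : ℤ[X]) (hP : P = ∑ a ∈ A, X ^ a)
    (S : Finset ℕ)
    (hS : ∀ s : ℕ, s ∈ S ↔ IsPrimePow s ∧ s ∣ N ∧ cyclotomic s ℤ ∣ P)
    (B : Finset (ZMod N))
    (htile : ∀ g : ZMod N,
      ∃! p : ℕ × ZMod N, p.1 ∈ A ∧ p.2 ∈ B ∧ (p.1 : ZMod N) + p.2 = g) :
    P.eval 1 = ∏ s ∈ S, (cyclotomic s ℤ).eval 1 := by
  classical
  haveI : NeZero N := ⟨hN.ne'⟩
  set Q : ℤ[X] := ∑ b ∈ B, X ^ (b.val) with hQ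
  -- Step A: every prime power dividing N has its cyclotomic dividing P * Q
  have key : ∀ s : ℕ, IsPrimePow s → s ∣ N → cyclotomic s ℤ ∣ P * Q := by
    intro s hs hsN
    have hs0 : 0 < s := hs.pos
    have hs1 : 1 < s := hs.one_lt
    have hζ := Complex.isPrimitiveRoot_exp s hs0.ne'
    set ζ : ℂ := Complex.exp (2 * Real.pi * Complex.I / s) with hζdef
    have hζN : ζ ^ N = 1 := by
      obtain ⟨c, rfl⟩ := hsN
      rw [pow_mul, hζ.pow_eq_one, one_pow]
    have hmod : ∀ m : ℕ, ζ ^ (m % N) = ζ ^ m := by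
      intro m
      conv_rhs => rw [← Nat.mod_add_div m N]
      rw [pow_add, pow_mul, hζN, one_pow, mul_one]
    have hroot : (Polynomial.aeval ζ) (P * Q) = 0 := by
      rw [map_mul]
      have hPz : (Polynomial.aeval ζ) P = ∑ a ∈ A, ζ ^ a := by
        rw [hP]; simp
      have hQz : (Polynomial.aeval ζ) Q = ∑ b ∈ B, ζ ^ (b.val) := by
        rw [hQ]; simp
      rw [hPz, hQz, Finset.sum_mul_sum, ← Finset.sum_product']
      have hval : ∀ p : ℕ × ZMod N, p ∈ A ×ˢ B →
          ζ ^ p.1 * ζ ^ (p.2.val) = ζ ^ (((p.1 : ZMod N) + p.2).val) := by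
        intro p _
        rw [ZMod.val_add, ZMod.val_natCast, hmod, pow_add, hmod]
      have hbij : ∑ p ∈ A ×ˢ B, ζ ^ p.1 * ζ ^ (p.2.val)
          = ∑ g : ZMod N, ζ ^ (g.val) := by
        refine Finset.sum_bij (fun p _ => (p.1 : ZMod N) + p.2) ?_ ?_ ?_ ?_
        · intro p _; exact Finset.mem_univ _
        · intro p hp q hq hpq
          rw [Finset.mem_product] at hp hq
          exact ((htile ((p.1 : ZMod N) + p.2)).unique ⟨hp.1, hp.2, rfl⟩
            ⟨hq.1, hq.2, hpq.symm⟩)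
        · intro g _
          obtain ⟨p, ⟨hp1, hp2, hp3⟩, -⟩ := htile g
          exact ⟨p, Finset.mem_product.mpr ⟨hp1, hp2⟩, hp3⟩
        · exact hval
      rw [hbij]
      have hvals : ∑ g : ZMod N, ζ ^ (g.val) = ∑ i ∈ Finset.range N, ζ ^ i := by
        refine Finset.sum_bij (fun g _ => g.val) ?_ ?_ ?_ ?_
        · intro g _; exact Finset.mem_range.mpr (ZMod.val_lt g)
        · intro g _ h _ hgh; exact ZMod.val_injective N hgh
        · intro i hi
          exact ⟨(i : ZMod N), Finset.mem_univ _,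
            ZMod.val_cast_of_lt (Finset.mem_range.mp hi)⟩
        · intro g _; rfl
      rw [hvals, geom_sum_eq (hζ.ne_one hs1), hζN, sub_self, zero_div]
    have hdvdQ : cyclotomic s ℚ ∣ (P * Q).map (Int.castRingHom ℚ) := by
      rw [cyclotomic_eq_minpoly_rat hζ hs0]
      apply minpoly.dvd ℚ ζ
      have : Int.castRingHom ℚ = algebraMap ℤ ℚ := rfl
      rw [this, Polynomial.aeval_map_algebraMap]
      exact hroot
    rw [← map_cyclotomic_int s ℚ] at hdvdQ
    exact (map_dvd_map (Int.castRingHom ℚ) Int.cast_injective (cyclotomic.monic s ℤ)).mp hdvdQ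
  -- the set of prime powers dividing N
  set T : Finset ℕ := (N.divisors.erase 1).filter IsPrimePow with hT
  have hmemT : ∀ s, s ∈ T ↔ IsPrimePow s ∧ s ∣ N := by
    intro s
    simp only [hT, Finset.mem_filter, Finset.mem_erase, Nat.mem_divisors]
    constructor
    · rintro ⟨⟨-, h1, -⟩, h2⟩; exact ⟨h2, h1⟩
    · rintro ⟨h1, h2⟩; exact ⟨⟨h1.ne_one, h2, hN.ne'⟩, h1⟩
  -- the product of Φ_s(1) over all prime powers s ∣ N equals N
  have prodT : ∏ s ∈ T, (cyclotomic s ℤ).eval 1 = (N : ℤ) := by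
    have h1 : ∏ d ∈ N.divisors.erase 1, (cyclotomic d ℤ).eval 1 = (N : ℤ) := by
      have := congrArg (Polynomial.eval (1 : ℤ)) (prod_cyclotomic_eq_geom_sum hN ℤ)
      simpa [Polynomial.eval_prod] using this
    rw [← h1, ← Finset.prod_filter_mul_prod_filter_not (N.divisors.erase 1) IsPrimePow]
    have h2 : ∏ d ∈ (N.divisors.erase 1).filter (fun d => ¬ IsPrimePow d),
        (cyclotomic d ℤ).eval 1 = 1 := by
      apply Finset.prod_eq_one
      intro d hd
      rw [Finset.mem_filter, Finset.mem_erase] at hd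
      apply eval_one_cyclotomic_not_prime_pow
      intro p hp k hpk
      rcases Nat.eq_zero_or_pos k with rfl | hk
      · exact hd.1.1 hpk.symm
      · exact hd.2 ⟨p, k, hp.prime, hk, hpk⟩
    rw [h2, mul_one]
  -- S is exactly the elements of T whose cyclotomic divides P
  have hSsub : S = T.filter (fun s => cyclotomic s ℤ ∣ P) := by
    ext s
    rw [Finset.mem_filter, hS, hmemT]
    tauto
  set SB : Finset ℕ := T.filter (fun s => cyclotomic s ℤ ∣ Q) with hSB
  have hcover : T ⊆ S ∪ SB := by
    intro s hsT
    obtain ⟨hpp, hdvd⟩ := (hmemT s).mp hsT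
    have hprime : Prime (cyclotomic s ℤ) :=
      UniqueFactorizationMonoid.irreducible_iff_prime.mp (cyclotomic.irreducible hpp.pos)
    rcases hprime.dvd_mul.mp (key s hpp hdvd) with h | h
    · exact Finset.mem_union_left _ ((hS s).mpr ⟨hpp, hdvd, h⟩)
    · exact Finset.mem_union_right _ (Finset.mem_filter.mpr ⟨hsT, h⟩)
  -- products of distinct cyclotomics divide
  have prod_dvd : ∀ (F : Finset ℕ) (R : ℤ[X]), (∀ s ∈ F, 0 < s) →
      (∀ s ∈ F, cyclotomic s ℤ ∣ R) → (∏ s ∈ F, cyclotomic s ℤ) ∣ R := by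
    intro F R hFpos hFdvd
    have hQdvd : (∏ s ∈ F, cyclotomic s ℚ) ∣ R.map (Int.castRingHom ℚ) := by
      apply Finset.prod_dvd_of_coprime
      · intro m hm n hn hmn
        exact cyclotomic.isCoprime_rat hmn
      · intro s hsF
        have := hFdvd s hsF
        rw [← map_cyclotomic_int s ℚ]
        exact Polynomial.map_dvd _ this
    have heq : (∏ s ∈ F, cyclotomic s ℚ)
        = (∏ s ∈ F, cyclotomic s ℤ).map (Int.castRingHom ℚ) := by
      rw [Polynomial.map_prod]
      exact Finset.prod_congr rfl fun s _ => (map_cyclotomic_int s ℚ).symm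
    rw [heq] at hQdvd
    exact (map_dvd_map (Int.castRingHom ℚ) Int.cast_injective
      (monic_prod_of_monic _ _ fun s _ => cyclotomic.monic s ℤ)).mp hQdvd
  have hposT : ∀ s ∈ T, 0 < s := fun s hs => ((hmemT s).mp hs).1.pos
  have hSdvdP : (∏ s ∈ S, cyclotomic s ℤ) ∣ P :=
    prod_dvd S P (fun s hs => ((hS s).mp hs).1.pos) (fun s hs => ((hS s).mp hs).2.2)
  have hSBdvdQ : (∏ s ∈ SB, cyclotomic s ℤ) ∣ Q :=
    prod_dvd SB Q (fun s hs => hposT s (Finset.mem_filter.mp hs).1)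
      (fun s hs => (Finset.mem_filter.mp hs).2)
  -- evaluate at 1
  set a : ℤ := P.eval 1 with ha
  set b : ℤ := Q.eval 1 with hb
  set u : ℤ := ∏ s ∈ S, (cyclotomic s ℤ).eval 1 with hu
  set v : ℤ := ∏ s ∈ SB, (cyclotomic s ℤ).eval 1 with hv
  have hua : u ∣ a := by
    obtain ⟨c, hc⟩ := hSdvdP
    exact ⟨c.eval 1, by rw [ha, hc, eval_mul, eval_prod]⟩
  have hvb : v ∣ b := by
    obtain ⟨c, hc⟩ := hSBdvdQ
    exact ⟨c.eval 1, by rw [hb, hc, eval_mul, eval_prod]⟩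
  -- Φ_s(1) ≥ 2 for prime powers s
  have hev2 : ∀ s, IsPrimePow s → 2 ≤ (cyclotomic s ℤ).eval 1 := by
    intro s hs
    obtain ⟨p, k, hp, hk, rfl⟩ := hs
    rcases Nat.exists_eq_add_of_lt hk with ⟨k', rfl⟩
    haveI : Fact (p.Prime) := ⟨hp.nat_prime⟩
    rw [zero_add, eval_one_cyclotomic_prime_pow]
    exact_mod_cast hp.nat_prime.two_le
  have hupos : 0 < u := Finset.prod_pos fun s hs =>
    lt_of_lt_of_le two_pos (hev2 s ((hS s).mp hs).1)
  have hvpos : 0 < v := Finset.prod_pos fun s hs =>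
    lt_of_lt_of_le two_pos (hev2 s ((hmemT s).mp (Finset.mem_filter.mp hs).1).1)
  -- N divides u * v
  have hNuv : (N : ℤ) ∣ u * v := by
    rw [← prodT]
    calc (∏ s ∈ T, (cyclotomic s ℤ).eval 1)
        ∣ ∏ s ∈ S ∪ SB, (cyclotomic s ℤ).eval 1 :=
          Finset.prod_dvd_prod_of_subset _ _ _ hcover
      _ = (∏ s ∈ S, (cyclotomic s ℤ).eval 1) * ∏ s ∈ SB \ S, (cyclotomic s ℤ).eval 1 := by
          rw [← Finset.prod_union (Finset.disjoint_sdiff)]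
          exact Finset.prod_congr (by rw [Finset.union_sdiff_self_eq_union]) fun _ _ => rfl
      _ ∣ u * v := mul_dvd_mul_left u (Finset.prod_dvd_prod_of_subset _ _ _
          (Finset.sdiff_subset))
  -- a * b = N
  have hcards : a * b = (N : ℤ) := by
    have haA : a = (A.card : ℤ) := by rw [ha, hP]; simp [eval_finset_sum]
    have hbB : b = (B.card : ℤ) := by rw [hb, hQ]; simp [eval_finset_sum]
    have hcard : A.card * B.card = N := by
      have : (A ×ˢ B).card = (Finset.univ : Finset (ZMod N)).card := by
        refine Finset.card_bij (fun p _ => (p.1 : ZMod N) + p.2) ?_ ?_ ?_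
        · intro p _; exact Finset.mem_univ _
        · intro p hp q hq hpq
          rw [Finset.mem_product] at hp hq
          exact ((htile ((p.1 : ZMod N) + p.2)).unique ⟨hp.1, hp.2, rfl⟩
            ⟨hq.1, hq.2, hpq.symm⟩)
        · intro g _
          obtain ⟨p, ⟨hp1, hp2, hp3⟩, -⟩ := htile g
          exact ⟨p, Finset.mem_product.mpr ⟨hp1, hp2⟩, hp3⟩
      rwa [Finset.card_product, Finset.card_univ, ZMod.card] at this
    rw [haA, hbB, ← Nat.cast_mul, hcard]
  have hapos : 0 < a := by
    rw [ha, hP]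
    simp only [eval_finset_sum, eval_pow, eval_X, one_pow]
    rw [Finset.sum_const, nsmul_eq_mul, mul_one]
    exact_mod_cast Finset.card_pos.mpr ⟨0, h0⟩
  have hbpos : 0 < b := by
    obtain ⟨p, ⟨-, hp2, -⟩, -⟩ := htile 0
    rw [hb, hQ]
    simp only [eval_finset_sum, eval_pow, eval_X, one_pow]
    rw [Finset.sum_const, nsmul_eq_mul, mul_one]
    exact_mod_cast Finset.card_pos.mpr ⟨p.2, hp2⟩
  -- final arithmetic
  obtain ⟨m, hm⟩ := hua
  obtain ⟨n, hn⟩ := hvb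
  obtain ⟨k, hk⟩ := hNuv
  have hmpos : 0 < m := by
    have : 0 < u * m := hm ▸ hapos
    by_contra h
    push_neg at h
    nlinarith
  have hnpos : 0 < n := by
    have : 0 < v * n := hn ▸ hbpos
    by_contra h
    push_neg at h
    nlinarith
  have hkpos : 0 < k := by
    have h1 : 0 < (N : ℤ) * k := hk ▸ mul_pos hupos hvpos
    by_contra h
    push_neg at h
    have hN' : (0:ℤ) < N := by exact_mod_cast hN
    nlinarith
  have hNne : (N : ℤ) ≠ 0 := by exact_mod_cast hN.ne'
  have hk1 : k * (m * n) = 1 := by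
    have h1 : (N : ℤ) * (k * (m * n)) = (N : ℤ) * 1 := by
      calc (N : ℤ) * (k * (m * n)) = (u * v) * (m * n) := by rw [hk]; ring
        _ = (u * m) * (v * n) := by ring
        _ = a * b := by rw [hm, hn]
        _ = (N : ℤ) * 1 := by rw [hcards, mul_one]
    exact mul_left_cancel₀ hNne h1
  have h1m : 1 ≤ m := by omega
  have h1k : 1 ≤ k := by omega
  have h1n : 1 ≤ n := by omega
  have hm1 : m = 1 := by
    refine le_antisymm ?_ h1m
    calc m ≤ m * (k * n) := le_mul_of_one_le_right hmpos.le (by nlinarith)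
      _ = k * (m * n) := by ring
      _ = 1 := hk1
  rw [hm, hm1, mul_one]
end

section
/- If A tiles ℤ_N, then every prime power p^a in S_A (i.e. with Φ_{p^a}(X) | A(X)) divides N. -/
open Polynomial

/-- `X^N - 1` divides `X^m - X^(m % N)`. -/
lemma aux_dvd_pow_mod {R : Type*} [CommRing R] (N m : ℕ) :
    (X ^ N - 1 : R[X]) ∣ X ^ m - X ^ (m % N) := by
  obtain ⟨q, hq⟩ : (X ^ N - 1 : R[X]) ∣ (X ^ N) ^ (m / N) - 1 := by
    simpa using sub_dvd_pow_sub_pow (X ^ N : R[X]) 1 (m / N)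
  refine ⟨q * X ^ (m % N), ?_⟩
  have hm : X ^ m = ((X : R[X]) ^ N) ^ (m / N) * X ^ (m % N) := by
    rw [← pow_mul, ← pow_add, Nat.div_add_mod]
  rw [hm]
  linear_combination X ^ (m % N) * hq

/-- If `A` tiles `ℤ_N`, then every prime power `s` with `Φ_s ∣ A(X)` divides `N`. -/
theorem stmt_13 (A : Finset ℕ) (h0 : 0 ∈ A) (N : ℕ) (hN : 0 < N)
    (P : ℤ[X]) (hP : P = ∑ a ∈ A, X ^ a)
    (B : Finset (ZMod N))
    (htile : ∀ g : ZMod N,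
      ∃! p : ℕ × ZMod N, p.1 ∈ A ∧ p.2 ∈ B ∧ (p.1 : ZMod N) + p.2 = g) :
    ∀ s : ℕ, IsPrimePow s → cyclotomic s ℤ ∣ P → s ∣ N := by
  intro s hs hdvd
  haveI : NeZero N := ⟨hN.ne'⟩
  set C : ℤ[X] := ∑ p ∈ A ×ˢ B, X ^ (p.1 + p.2.val) with hC
  set D : ℤ[X] := ∑ k ∈ Finset.range N, X ^ k with hD
  -- D as a sum over A ×ˢ B
  have hDeq : D = ∑ p ∈ A ×ˢ B, (X : ℤ[X]) ^ ((p.1 : ZMod N) + p.2).val := by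
    rw [hD]
    refine (Finset.sum_bij (fun p _ => ((p.1 : ZMod N) + p.2).val) ?_ ?_ ?_ ?_).symm
    · intro p hp
      exact Finset.mem_range.mpr (ZMod.val_lt _)
    · intro p1 hp1 p2 hp2 h
      have h' : ((p1.1 : ZMod N) + p1.2) = ((p2.1 : ZMod N) + p2.2) :=
        ZMod.val_injective _ h
      obtain ⟨hm1, hm2⟩ := Finset.mem_product.mp hp1
      obtain ⟨hm1', hm2'⟩ := Finset.mem_product.mp hp2
      exact (htile ((p1.1 : ZMod N) + p1.2)).unique ⟨hm1, hm2, rfl⟩ ⟨hm1', hm2', h'.symm⟩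
    · intro k hk
      obtain ⟨p, ⟨hp1, hp2, hp3⟩, _⟩ := htile ((k : ℕ) : ZMod N)
      refine ⟨p, Finset.mem_product.mpr ⟨hp1, hp2⟩, ?_⟩
      show ((p.1 : ZMod N) + p.2).val = k
      rw [hp3, ZMod.val_natCast, Nat.mod_eq_of_lt (Finset.mem_range.mp hk)]
    · intro p hp; rfl
  -- key divisibility
  have hkey : (X ^ N - 1 : ℤ[X]) ∣ C - D := by
    rw [hC, hDeq, ← Finset.sum_sub_distrib]
    refine Finset.dvd_sum fun p hp => ?_
    have hv : ((p.1 : ZMod N) + p.2).val = (p.1 + p.2.val) % N := by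
      have : ((p.1 : ZMod N) + p.2) = (((p.1 + p.2.val : ℕ)) : ZMod N) := by
        push_cast [ZMod.natCast_val, ZMod.cast_id]
        ring
      rw [this, ZMod.val_natCast]
    rw [hv]
    exact aux_dvd_pow_mod N _
  obtain ⟨R, hR⟩ := hkey
  -- (X-1) * C = (X^N - 1) * g with g 1 = 1
  set g : ℤ[X] := 1 + (X - 1) * R with hg
  have hfac : (X - 1) * C = (X ^ N - 1) * g := by
    have hCD : C = D + (X ^ N - 1) * R := by rw [← hR]; ring
    have hDgeom : (X - 1) * D = X ^ N - 1 := by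
      rw [hD, mul_comm]; exact geom_sum_mul (X : ℤ[X]) N
    calc (X - 1) * C = (X - 1) * D + (X - 1) * ((X ^ N - 1) * R) := by rw [hCD]; ring
      _ = (X ^ N - 1) + (X - 1) * ((X ^ N - 1) * R) := by rw [hDgeom]
      _ = (X ^ N - 1) * g := by rw [hg]; ring
  -- P divides C
  have hPC : P ∣ C := by
    refine ⟨∑ b ∈ B, X ^ (b.val), ?_⟩
    rw [hP, hC, Finset.sum_product, Finset.sum_mul]
    refine Finset.sum_congr rfl fun a _ => ?_
    rw [Finset.mul_sum]
    exact Finset.sum_congr rfl fun b _ => pow_add X a b.val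
  have hsc : cyclotomic s ℤ ∣ (X ^ N - 1) * g := by
    rw [← hfac]
    exact Dvd.dvd.mul_left (hdvd.trans hPC) _
  have hs1 : 1 < s := hs.one_lt
  have hirr : Irreducible (cyclotomic s ℤ) := cyclotomic.irreducible (by omega)
  have hprime : Prime (cyclotomic s ℤ) :=
    UniqueFactorizationMonoid.irreducible_iff_prime.mp hirr
  rcases hprime.2.2 _ _ hsc with hcase | hcase
  · -- cyclotomic s ∣ X^N - 1 : pass to ℂ
    have hζ : IsPrimitiveRoot (Complex.exp (2 * Real.pi * Complex.I / s)) s :=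
      Complex.isPrimitiveRoot_exp s (by omega)
    set ζ := Complex.exp (2 * Real.pi * Complex.I / s)
    have hroot : (cyclotomic s ℂ).IsRoot ζ := hζ.isRoot_cyclotomic (by omega)
    have hdvdC : (cyclotomic s ℂ) ∣ (X ^ N - 1 : ℂ[X]) := by
      have := Polynomial.map_dvd (Int.castRingHom ℂ) hcase
      simpa [map_cyclotomic] using this
    have hzero : (X ^ N - 1 : ℂ[X]).eval ζ = 0 := by
      obtain ⟨q, hq⟩ := hdvdC
      rw [hq, eval_mul, hroot, zero_mul]
    have hpow : ζ ^ N = 1 := by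
      have := hzero
      simp [eval_pow, eval_sub, eval_one, eval_X, sub_eq_zero] at this
      exact this
    exact hζ.dvd_of_pow_eq_one _ hpow
  · -- cyclotomic s ∣ g : evaluate at 1
    obtain ⟨p, k, hp, hk, rfl⟩ := hs
    haveI : Fact p.Prime := ⟨hp.nat_prime⟩
    have heval : (cyclotomic (p ^ k) ℤ).eval 1 = p := by
      obtain ⟨k', rfl⟩ : ∃ k', k = k' + 1 := ⟨k - 1, by omega⟩
      exact eval_one_cyclotomic_prime_pow k'
    have hd1 : (cyclotomic (p ^ k) ℤ).eval 1 ∣ g.eval 1 := eval_dvd hcase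
    have hg1 : g.eval 1 = 1 := by simp [hg]
    rw [heval, hg1] at hd1
    have hpd : p ∣ 1 := by exact_mod_cast hd1
    have := Nat.le_of_dvd one_pos hpd
    have := hp.nat_prime.one_lt
    omega
end
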